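/- Exact tripartition prediction: let ψ = min(ψ_p, ψ_d) where ψ_p = inf over primal solutions of min{x*_i : x*_i > 0} and ψ_d = inf over dual solutions of min{s*_i : s*_i > 0}, and assume ψ > 0. Set C = ψ/2, fix λ with 0 < ‖λ‖ < min(1, ψ/(16 max(τ_p,τ_d))), and let (x,y,s) ∈ N̄(γ,λ) with 0 < μ_λ < min(1, (ψ/(4 max(τ_p,τ_d) C₂))²). Then there exists an optimal solution (x*,y*,s*) of the original QP such that {i : s_i ≥ C} = {i : s*_i > 0}, {i : x_i ≥ C} = {i : x*_i > 0}, and the complements agree: {1,…,n}\({i : s_i ≥ C} ∪ {i : x_i ≥ C}) = {1,…,n}\({i : s*_i > 0} ∪ {i : x*_i > 0}). -/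

import Mathlib

open Matrix

/-- Euclidean norm of a finite real vector. -/
noncomputable def eucNorm {ι : Type*} [Fintype ι] (v : ι → ℝ) : ℝ :=
  Real.sqrt (∑ i, v i ^ 2)

/-- Perturbed duality measure `μ_λ = (x+λ)ᵀ(s+λ)/n`. -/
noncomputable def muLam {n : ℕ} (lam x s : Fin n → ℝ) : ℝ :=
  (∑ i, (x i + lam i) * (s i + lam i)) / n

/-- Membership in the symmetric neighbourhood `N̄(γ, λ)` of the perturbed
central path. -/
def InSymNbhd {m n : ℕ} (H : Matrix (Fin n) (Fin n) ℝ)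
    (A : Matrix (Fin m) (Fin n) ℝ) (b : Fin m → ℝ) (c : Fin n → ℝ)
    (γ : ℝ) (lam x s : Fin n → ℝ) (y : Fin m → ℝ) : Prop :=
  A.mulVec x = b ∧ Aᵀ.mulVec y + s - H.mulVec x = c ∧
  (∀ i, 0 < x i + lam i) ∧ (∀ i, 0 < s i + lam i) ∧
  ∀ i, γ * muLam lam x s ≤ (x i + lam i) * (s i + lam i) ∧
    (x i + lam i) * (s i + lam i) ≤ muLam lam x s / γ

/-- The KKT conditions of the original QP. -/
def KKT {m n : ℕ} (H : Matrix (Fin n) (Fin n) ℝ) (A : Matrix (Fin m) (Fin n) ℝ)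
    (b : Fin m → ℝ) (c : Fin n → ℝ)
    (xs : Fin n → ℝ) (ys : Fin m → ℝ) (ss : Fin n → ℝ) : Prop :=
  A.mulVec xs = b ∧ Aᵀ.mulVec ys + ss - H.mulVec xs = c ∧
  (∀ i, xs i * ss i = 0) ∧ 0 ≤ xs ∧ 0 ≤ ss

/-- `C₂ = √(n/γ) + n`. -/
noncomputable def C2 (n : ℕ) (γ : ℝ) : ℝ := Real.sqrt (n / γ) + n

/-- The proximity bound `C₂ √μ_λ max(√μ_λ, 1) + 4‖λ‖ max(‖λ‖, 1)`. -/
noncomputable def proxBound {n : ℕ} (γ : ℝ) (lam x s : Fin n → ℝ) : ℝ :=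
  C2 n γ * Real.sqrt (muLam lam x s) * max (Real.sqrt (muLam lam x s)) 1
    + 4 * eucNorm lam * max (eucNorm lam) 1

/-
The proximity hypothesis puts `x` and `s` within `τ · proxBound` of an optimal
`(x*, s*)`, and the smallness of `‖λ‖` and `μ_λ` makes that distance less than `ψ/2` in
every coordinate. Each component of `x*` and `s*` is either `0` or at least `ψ`, so thresholding
`x` and `s` at `ψ/2` recovers the supports of `x*` and `s*` exactly.
-/

lemma abs_apply_le_eucNorm {ι : Type*} [Fintype ι] (v : ι → ℝ) (i : ι) :
    |v i| ≤ eucNorm v := by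
  rw [eucNorm, ← Real.sqrt_sq_eq_abs]
  exact Real.sqrt_le_sqrt (Finset.single_le_sum (fun j _ => sq_nonneg (v j)) (Finset.mem_univ i))

lemma C2_nonneg (n : ℕ) (γ : ℝ) : 0 ≤ C2 n γ := by
  unfold C2
  positivity

lemma proxBound_nonneg {n : ℕ} (γ : ℝ) (lam x s : Fin n → ℝ) : 0 ≤ proxBound γ lam x s := by
  unfold proxBound eucNorm
  have := C2_nonneg n γ
  positivity

lemma mul_sqrt_lt_of_lt_div_sq {a r t : ℝ} (ha : 0 ≤ a) (hr : 0 < r) (ht : t < (r / a) ^ 2) :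
    a * √t < r := by
  rcases ha.eq_or_lt with rfl | ha
  · simpa using hr
  · have := (Real.sqrt_lt' (div_pos hr ha)).2 ht
    rwa [lt_div_iff₀' ha] at this

lemma mul_proxBound_lt {n : ℕ} {γ M ψ : ℝ} {lam x s : Fin n → ℝ} (hM : 0 < M) (hψ : 0 < ψ)
    (hlam : eucNorm lam < min 1 (ψ / (16 * M)))
    (hmu : muLam lam x s < min 1 ((ψ / (4 * M * C2 n γ)) ^ 2)) :
    M * proxBound γ lam x s < ψ / 2 := by
  rw [lt_min_iff] at hlam hmu
  have hsqrt_mu : √(muLam lam x s) < 1 := (Real.sqrt_lt' one_pos).2 (by simpa using hmu.1)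
  have hcentral : C2 n γ * √(muLam lam x s) < ψ / (4 * M) :=
    mul_sqrt_lt_of_lt_div_sq (C2_nonneg n γ) (by positivity) (by rw [div_div]; exact hmu.2)
  have hperturb : 4 * eucNorm lam < ψ / (4 * M) := by
    have : 4 * (ψ / (16 * M)) = ψ / (4 * M) := by field_simp; ring
    linarith [hlam.2]
  unfold proxBound
  rw [max_eq_right hsqrt_mu.le, max_eq_right hlam.1.le, mul_one, mul_one]
  calc M * (C2 n γ * √(muLam lam x s) + 4 * eucNorm lam)
      < M * (ψ / (4 * M) + ψ / (4 * M)) := by gcongr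
    _ = ψ / 2 := by field_simp; ring

lemma sInf_le_of_forall_pos {S : Set ℝ} (hS : ∀ v ∈ S, 0 < v) {a : ℝ} (ha : a ∈ S) :
    sInf S ≤ a :=
  csInf_le ⟨0, fun v hv => (hS v hv).le⟩ ha

lemma setOf_half_le_eq_setOf_pos {ι : Type*} {ψ : ℝ} {v w : ι → ℝ}
    (hgap : ∀ i, 0 < w i → ψ ≤ w i) (hclose : ∀ i, |v i - w i| < ψ / 2) :
    {i | ψ / 2 ≤ v i} = {i | 0 < w i} := by
  ext i
  obtain ⟨hlo, hhi⟩ := abs_lt.1 (hclose i)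
  change ψ / 2 ≤ v i ↔ 0 < w i
  constructor
  · intro hv
    by_contra hwi
    linarith [not_lt.1 hwi]
  · intro hwi
    linarith [hgap i hwi]

theorem exact_tripartition_prediction_general {m n : ℕ}
    (H : Matrix (Fin n) (Fin n) ℝ) (A : Matrix (Fin m) (Fin n) ℝ)
    (b : Fin m → ℝ) (c : Fin n → ℝ)
    (γ : ℝ)
    (τp τd : ℝ) (hτp : 0 < τp)
    (ψp ψd ψ : ℝ)
    (hψp : ψp = sInf {v : ℝ | ∃ (xs : Fin n → ℝ) (ys : Fin m → ℝ) (ss : Fin n → ℝ)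
      (i : Fin n), KKT H A b c xs ys ss ∧ 0 < xs i ∧ v = xs i})
    (hψd : ψd = sInf {v : ℝ | ∃ (xs : Fin n → ℝ) (ys : Fin m → ℝ) (ss : Fin n → ℝ)
      (i : Fin n), KKT H A b c xs ys ss ∧ 0 < ss i ∧ v = ss i})
    (hψ : ψ = min ψp ψd) (hψpos : 0 < ψ)
    (lam : Fin n → ℝ)
    (hlamub : eucNorm lam < min 1 (ψ / (16 * max τp τd)))
    (x : Fin n → ℝ) (s : Fin n → ℝ)
    (hmu : muLam lam x s < min 1 ((ψ / (4 * max τp τd * C2 n γ)) ^ 2))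
    (hprox : ∃ (xs : Fin n → ℝ) (ys : Fin m → ℝ) (ss : Fin n → ℝ),
      KKT H A b c xs ys ss ∧
      eucNorm (x - xs) < τp * proxBound γ lam x s ∧
      eucNorm (s - ss) < τd * proxBound γ lam x s) :
    ∃ (xs : Fin n → ℝ) (ys : Fin m → ℝ) (ss : Fin n → ℝ),
      KKT H A b c xs ys ss ∧
      {i : Fin n | ψ / 2 ≤ s i} = {i : Fin n | 0 < ss i} ∧
      {i : Fin n | ψ / 2 ≤ x i} = {i : Fin n | 0 < xs i} ∧
      Set.univ \ ({i : Fin n | ψ / 2 ≤ s i} ∪ {i : Fin n | ψ / 2 ≤ x i})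
        = Set.univ \ ({i : Fin n | 0 < ss i} ∪ {i : Fin n | 0 < xs i}) := by
  obtain ⟨xs, ys, ss, hKKT, hx, hs⟩ := hprox
  have hbound : max τp τd * proxBound γ lam x s < ψ / 2 :=
    mul_proxBound_lt (lt_max_of_lt_left hτp) hψpos hlamub hmu
  have hclose {τ : ℝ} (hτ : τ ≤ max τp τd) {v w : Fin n → ℝ}
      (h : eucNorm (v - w) < τ * proxBound γ lam x s) (i : Fin n) : |v i - w i| < ψ / 2 :=
    calc |v i - w i| ≤ eucNorm (v - w) := abs_apply_le_eucNorm (v - w) i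
      _ < τ * proxBound γ lam x s := h
      _ ≤ max τp τd * proxBound γ lam x s := by gcongr; exact proxBound_nonneg γ lam x s
      _ < ψ / 2 := hbound
  have hgap_x (i : Fin n) (hi : 0 < xs i) : ψ ≤ xs i :=
    calc ψ ≤ ψp := hψ ▸ min_le_left _ _
      _ ≤ xs i := hψp ▸ sInf_le_of_forall_pos (by rintro _ ⟨_, _, _, _, _, hpos, rfl⟩; exact hpos)
          ⟨xs, ys, ss, i, hKKT, hi, rfl⟩
  have hgap_s (i : Fin n) (hi : 0 < ss i) : ψ ≤ ss i :=
    calc ψ ≤ ψd := hψ ▸ min_le_right _ _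
      _ ≤ ss i := hψd ▸ sInf_le_of_forall_pos (by rintro _ ⟨_, _, _, _, _, hpos, rfl⟩; exact hpos)
          ⟨xs, ys, ss, i, hKKT, hi, rfl⟩
  have hS := setOf_half_le_eq_setOf_pos hgap_s (hclose (le_max_right _ _) hs)
  have hX := setOf_half_le_eq_setOf_pos hgap_x (hclose (le_max_left _ _) hx)
  exact ⟨xs, ys, ss, hKKT, hS, hX, by rw [hS, hX]⟩

/-- Exact tripartition prediction: let `ψ = min(ψ_p, ψ_d)` where `ψ_p` (resp.
`ψ_d`) is the infimum of the positive components over primal (resp. dual)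
optimal solutions, and assume `ψ > 0`. Set `C = ψ/2`, fix `λ` with
`0 < ‖λ‖ < min(1, ψ/(16 max(τ_p,τ_d)))`, and let `(x,y,s) ∈ N̄(γ,λ)` with
`0 < μ_λ < min(1, (ψ/(4 max(τ_p,τ_d) C₂))²)`. Then there is an optimal solution
`(x*,y*,s*)` of the original QP with `{i : sᵢ ≥ C} = {i : s*ᵢ > 0}`,
`{i : xᵢ ≥ C} = {i : x*ᵢ > 0}`, and the complements agree. -/
theorem exact_tripartition_prediction {m n : ℕ}
    (H : Matrix (Fin n) (Fin n) ℝ) (A : Matrix (Fin m) (Fin n) ℝ)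
    (b : Fin m → ℝ) (c : Fin n → ℝ) (hH : H.PosSemidef)
    (γ : ℝ) (hγ : γ ∈ Set.Ioo (0 : ℝ) 1)
    (τp τd : ℝ) (hτp : 0 < τp) (hτd : 0 < τd)
    (ψp ψd ψ : ℝ)
    (hψp : ψp = sInf {v : ℝ | ∃ (xs : Fin n → ℝ) (ys : Fin m → ℝ) (ss : Fin n → ℝ)
      (i : Fin n), KKT H A b c xs ys ss ∧ 0 < xs i ∧ v = xs i})
    (hψd : ψd = sInf {v : ℝ | ∃ (xs : Fin n → ℝ) (ys : Fin m → ℝ) (ss : Fin n → ℝ)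
      (i : Fin n), KKT H A b c xs ys ss ∧ 0 < ss i ∧ v = ss i})
    (hψ : ψ = min ψp ψd) (hψpos : 0 < ψ)
    (lam : Fin n → ℝ) (hlam : 0 ≤ lam) (hlam0 : 0 < eucNorm lam)
    (hlamub : eucNorm lam < min 1 (ψ / (16 * max τp τd)))
    (x : Fin n → ℝ) (y : Fin m → ℝ) (s : Fin n → ℝ)
    (hmem : InSymNbhd H A b c γ lam x s y)
    (hmu0 : 0 < muLam lam x s)
    (hmu : muLam lam x s < min 1 ((ψ / (4 * max τp τd * C2 n γ)) ^ 2))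
    (hprox : ∃ (xs : Fin n → ℝ) (ys : Fin m → ℝ) (ss : Fin n → ℝ),
      KKT H A b c xs ys ss ∧
      eucNorm (x - xs) < τp * proxBound γ lam x s ∧
      eucNorm (s - ss) < τd * proxBound γ lam x s) :
    ∃ (xs : Fin n → ℝ) (ys : Fin m → ℝ) (ss : Fin n → ℝ),
      KKT H A b c xs ys ss ∧
      {i : Fin n | ψ / 2 ≤ s i} = {i : Fin n | 0 < ss i} ∧
      {i : Fin n | ψ / 2 ≤ x i} = {i : Fin n | 0 < xs i} ∧
      Set.univ \ ({i : Fin n | ψ / 2 ≤ s i} ∪ {i : Fin n | ψ / 2 ≤ x i})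
        = Set.univ \ ({i : Fin n | 0 < ss i} ∪ {i : Fin n | 0 < xs i}) :=
  exact_tripartition_prediction_general H A b c γ τp τd hτp ψp ψd ψ hψp hψd hψ hψpos lam hlamub x s
    hmu hprox
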